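/- arXiv:2604.21808 — 4 statements merged into one kernel-verified Lean document; each statement's English description precedes it below -/
import Mathlib

section
/- Let G be a matrix over a field with full row rank, and let G_1 be a matrix with the same row space as G. Then rank(G G^T) = rank(G_1 G_1^T). -/
namespace Matrix

variable {R m m' n : Type*}

theorem exists_eq_mul_of_span_row_le [CommSemiring R] [Fintype m] {A : Matrix m n R}
    {B : Matrix m' n R}
    (h : Submodule.span R (Set.range B.row) ≤ Submodule.span R (Set.range A.row)) :
    ∃ C : Matrix m' m R, B = C * A := by
  rw [← range_vecMulLinear A] at h
  choose C hC using fun i => h (Submodule.subset_span ⟨i, rfl⟩)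
  exact ⟨of C, funext fun i => (hC i).symm⟩

theorem rank_mul_mul_transpose_le [CommSemiring R] [StrongRankCondition R] [Fintype m]
    [Fintype m'] (C : Matrix m' m R) (M : Matrix m m R) : (C * M * Cᵀ).rank ≤ M.rank :=
  (rank_mul_le_left _ _).trans (rank_mul_le_right _ _)

theorem rank_mul_transpose_self_le_of_span_row_le [CommSemiring R] [StrongRankCondition R]
    [Fintype m] [Fintype m'] [Fintype n] {A : Matrix m n R} {B : Matrix m' n R}
    (h : Submodule.span R (Set.range B.row) ≤ Submodule.span R (Set.range A.row)) :
    (B * Bᵀ).rank ≤ (A * Aᵀ).rank := by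
  obtain ⟨C, rfl⟩ := exists_eq_mul_of_span_row_le h
  simpa only [transpose_mul, Matrix.mul_assoc] using rank_mul_mul_transpose_le C (A * Aᵀ)

end Matrix

theorem rank_gram_eq_of_same_rowSpace_general (F : Type*) [Field F] (k l n : ℕ)
    (G : Matrix (Fin k) (Fin n) F) (G1 : Matrix (Fin l) (Fin n) F)
    (hrow : Submodule.span F (Set.range fun i => G i) =
      Submodule.span F (Set.range fun i => G1 i)) :
    (G * G.transpose).rank = (G1 * G1.transpose).rank :=
  le_antisymm (Matrix.rank_mul_transpose_self_le_of_span_row_le hrow.le)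
    (Matrix.rank_mul_transpose_self_le_of_span_row_le hrow.ge)

/-- If `G` has full row rank and `G₁` has the same row space as `G`, then
`rank (G Gᵀ) = rank (G₁ G₁ᵀ)`. -/
theorem rank_gram_eq_of_same_rowSpace (F : Type*) [Field F] (k l n : ℕ)
    (G : Matrix (Fin k) (Fin n) F) (G1 : Matrix (Fin l) (Fin n) F)
    (hG : G.rank = k)
    (hrow : Submodule.span F (Set.range fun i => G i) =
      Submodule.span F (Set.range fun i => G1 i)) :
    (G * G.transpose).rank = (G1 * G1.transpose).rank :=
  rank_gram_eq_of_same_rowSpace_general F k l n G G1 hrow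
end

section
/- Let X^a and X^b be monomials of degree v in variables x_0,...,x_m over F_q, and let P_1,...,P_n be the standard representatives of projective points of P^m(F_q) (first nonzero coordinate equal to 1). With c_i = a_i + b_i, the inner product Σ_{s=1}^{n} (X^a X^b)(P_s) equals Σ_{j=0}^{m} (Π_{i<j} 0^{c_i}) · Π_{t>j} σ(c_t), where σ(d) = Σ_{α∈F_q} α^d and 0^0 = 1. -/
/-!
Split the standard representatives according to the position `j` of their leading `1`.
Those with leading index `j` form the box `{0}^{i<j} × {1} × F^{t>j}`, and summing a
monomial over a box factors coordinatewise into `∏ (0^{c_i}) · 1 · ∏ σ(c_t)`.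
-/

/-- The sum of the monomial with exponent vector `c` over the standard
representatives of the points of `ℙ^m(F)` (vectors whose first nonzero
coordinate equals `1`). -/
def projSum (F : Type*) [Field F] [Fintype F] [DecidableEq F] (m : ℕ)
    (c : Fin (m + 1) → ℕ) : F :=
  ∑ p ∈ Finset.univ.filter
      (fun p : Fin (m + 1) → F => ∃ j, p j = 1 ∧ ∀ i, i < j → p i = 0),
    ∏ i, p i ^ c i

open Finset

section LeadingOne

variable {ι R : Type*} [Fintype ι] [LinearOrder ι]

theorem Finset.prod_eq_prod_lt_mul_mul_prod_gt {M : Type*} [CommMonoid M] (f : ι → M) (j : ι) :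
    ∏ i, f i = (∏ i ∈ univ.filter (· < j), f i) * f j * ∏ i ∈ univ.filter (j < ·), f i := by
  have hge : univ.filter (fun i => ¬ i < j) = insert j (univ.filter (j < ·)) := by
    ext i
    simp only [mem_filter, mem_univ, true_and, mem_insert, not_lt, le_iff_lt_or_eq]
    tauto
  rw [← prod_filter_mul_prod_filter_not univ (· < j), hge, prod_insert (by simp), mul_assoc]

variable [CommSemiring R] [Fintype R] [DecidableEq R]

theorem pairwiseDisjoint_filter_leading_one [Nontrivial R] :
    ((univ : Finset ι) : Set ι).PairwiseDisjoint
      fun j => univ.filter fun p : ι → R => p j = 1 ∧ ∀ i, i < j → p i = 0 := by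
  intro j₁ _ j₂ _ hne
  refine disjoint_left.mpr fun p hp₁ hp₂ => ?_
  simp only [mem_filter] at hp₁ hp₂
  rcases hne.lt_or_gt with h | h
  · exact one_ne_zero (hp₁.2.1 ▸ hp₂.2.2 j₁ h)
  · exact one_ne_zero (hp₂.2.1 ▸ hp₁.2.2 j₂ h)

theorem filter_leading_one_eq_piFinset (j : ι) :
    univ.filter (fun p : ι → R => p j = 1 ∧ ∀ i, i < j → p i = 0) =
      Fintype.piFinset fun i => if i < j then {0} else if i = j then {1} else univ := by
  ext p
  simp only [mem_filter, mem_univ, true_and, Fintype.mem_piFinset]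
  constructor
  · rintro ⟨hj, hlt⟩ i
    split_ifs with hij hij'
    · simpa using hlt i hij
    · simpa [hij'] using hj
    · exact mem_univ _
  · intro h
    refine ⟨by simpa using h j, fun i hi => ?_⟩
    simpa [if_pos hi] using h i

theorem sum_filter_leading_one_prod_pow [Nontrivial R] (c : ι → ℕ) :
    ∑ p ∈ univ.filter (fun p : ι → R => ∃ j, p j = 1 ∧ ∀ i, i < j → p i = 0), ∏ i, p i ^ c i =
      ∑ j, (∏ i ∈ univ.filter (· < j), (0 : R) ^ c i) *
        ∏ t ∈ univ.filter (j < ·), ∑ α : R, α ^ c t := by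
  have hunion : univ.filter (fun p : ι → R => ∃ j, p j = 1 ∧ ∀ i, i < j → p i = 0) =
      univ.biUnion fun j => univ.filter fun p : ι → R => p j = 1 ∧ ∀ i, i < j → p i = 0 := by
    ext p
    simp only [mem_filter, mem_univ, true_and, mem_biUnion]
  rw [hunion, sum_biUnion pairwiseDisjoint_filter_leading_one]
  refine sum_congr rfl fun j _ => ?_
  rw [filter_leading_one_eq_piFinset, ← prod_univ_sum _ fun i x => x ^ c i,
    prod_eq_prod_lt_mul_mul_prod_gt _ j]
  simp only [lt_self_iff_false, if_false, if_true, sum_singleton, one_pow, mul_one]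
  congr 1
  · exact prod_congr rfl fun i hi => by simp [(mem_filter.mp hi).2]
  · refine prod_congr rfl fun t ht => ?_
    have hjt := (mem_filter.mp ht).2
    rw [if_neg hjt.not_gt, if_neg hjt.ne']

end LeadingOne

theorem projSum_entry_formula_general (F : Type*) [Field F] [Fintype F] [DecidableEq F]
    (m : ℕ) (a b : Fin (m + 1) → ℕ) :
    projSum F m (fun i => a i + b i) =
      ∑ j : Fin (m + 1),
        (∏ i ∈ Finset.univ.filter (· < j), (0 : F) ^ (a i + b i)) *
          ∏ t ∈ Finset.univ.filter (j < ·), ∑ α : F, α ^ (a t + b t) := by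
  unfold projSum
  convert sum_filter_leading_one_prod_pow (R := F) fun i => a i + b i

/-- Entry formula: for degree-`v` monomials `X^a`, `X^b` in `x_0, …, x_m`, the sum
of `X^a X^b` over the standard representatives of `ℙ^m(F_q)` equals
`∑_{j=0}^m (∏_{i<j} 0^{c_i}) ∏_{t>j} σ(c_t)`, where `c_i = a_i + b_i` and
`σ(d) = ∑_{α ∈ F_q} α^d` (with `0^0 = 1`). -/
theorem projSum_entry_formula (F : Type*) [Field F] [Fintype F] [DecidableEq F]
    (m v : ℕ) (a b : Fin (m + 1) → ℕ)
    (hav : ∑ i, a i = v) (hbv : ∑ i, b i = v) :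
    projSum F m (fun i => a i + b i) =
      ∑ j : Fin (m + 1),
        (∏ i ∈ Finset.univ.filter (· < j), (0 : F) ^ (a i + b i)) *
          ∏ t ∈ Finset.univ.filter (j < ·), ∑ α : F, α ^ (a t + b t) :=
  projSum_entry_formula_general F m a b
end

section
/- Let q be a prime power, Q = q-1, v in the open interval (rQ/2, (r+1)Q/2), and write 2v = rQ + β with 0 < β < Q. Let X^a, X^b be degree-v monomials in x_0,...,x_m, c_i = a_i + b_i. Then Σ_{P} (X^a X^b)(P) over standard representatives P of P^m(F_q) is nonzero if and only if, setting s = min{i : c_i > 0}, we have c_s ≡ β (mod Q) and c_j is a positive multiple of Q for every j > s; in that case the sum equals (-1)^{m-s}. -/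
open Finset

namespace FiniteField

variable {F : Type*} [Field F] [Fintype F] [DecidableEq F]

theorem sum_pow_eq_ite (d : ℕ) :
    ∑ x : F, x ^ d = if Fintype.card F - 1 ∣ d ∧ 0 < d then -1 else 0 := by
  rcases Nat.eq_zero_or_pos d with rfl | hd
  · simp
  calc ∑ x : F, x ^ d = ∑ x : {x : F // x ≠ 0}, (x : F) ^ d := by
        rw [Fintype.sum_eq_add_sum_subtype_ne _ 0, zero_pow hd.ne', zero_add]
    _ = ∑ x : Fˣ, (x : F) ^ d := (Fintype.sum_equiv unitsEquivNeZero _ _ fun _ => rfl).symm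
    _ = _ := by simp [sum_pow_units, hd]

theorem sum_pow_ne_zero_iff {d : ℕ} :
    ∑ x : F, x ^ d ≠ 0 ↔ Fintype.card F - 1 ∣ d ∧ 0 < d := by
  rw [sum_pow_eq_ite]
  split_ifs with h <;> simp [h]

theorem prod_sum_pow_ne_zero_iff {ι : Type*} {S : Finset ι} {c : ι → ℕ} :
    ∏ t ∈ S, ∑ x : F, x ^ c t ≠ 0 ↔ ∀ t ∈ S, Fintype.card F - 1 ∣ c t ∧ 0 < c t := by
  simp only [prod_ne_zero_iff, sum_pow_ne_zero_iff]

theorem prod_sum_pow_eq_neg_one_pow {ι : Type*} {S : Finset ι} {c : ι → ℕ}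
    (h : ∀ t ∈ S, Fintype.card F - 1 ∣ c t ∧ 0 < c t) :
    ∏ t ∈ S, ∑ x : F, x ^ c t = (-1) ^ #S := by
  rw [prod_congr rfl fun t ht => by rw [sum_pow_eq_ite, if_pos (h t ht)], prod_const]

end FiniteField

theorem Nat.sum_modEq_of_eq_zero_of_dvd {ι : Type*} [Fintype ι] [LinearOrder ι] {n : ℕ}
    {c : ι → ℕ} {s : ι} (hlt : ∀ i, i < s → c i = 0) (hgt : ∀ j, s < j → n ∣ c j) : ∑ i, c i ≡ c s [MOD n] := by
  refine Nat.sum_modEq_single (absurd (mem_univ s)) fun j _ hjs => Nat.modEq_zero_iff_dvd.2 ?_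
  rcases hjs.lt_or_gt with h | h
  · simp [hlt j h]
  · exact hgt j h

section ProjSum

variable {F : Type*} [Field F] [Fintype F] {m : ℕ}

variable (F) in
def pivotBox (j : Fin (m + 1)) : Finset (Fin (m + 1) → F) :=
  Fintype.piFinset fun i => if i < j then {0} else if i = j then {1} else univ

theorem mem_pivotBox {j : Fin (m + 1)} {p : Fin (m + 1) → F} :
    p ∈ pivotBox F j ↔ p j = 1 ∧ ∀ i, i < j → p i = 0 := by
  simp only [pivotBox, Fintype.mem_piFinset]
  constructor
  · intro h
    exact ⟨by simpa using h j, fun i hi => by simpa [hi] using h i⟩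
  · rintro ⟨hj, hlt⟩ i
    split_ifs with hi hij
    · simp [hlt i hi]
    · simp [hij, hj]
    · exact mem_univ _

theorem pairwiseDisjoint_pivotBox :
    ((univ : Finset (Fin (m + 1))) : Set (Fin (m + 1))).PairwiseDisjoint (pivotBox F) := by
  intro j _ k _ hjk
  refine disjoint_left.2 fun p hj hk => ?_
  rw [mem_pivotBox] at hj hk
  rcases hjk.lt_or_gt with h | h
  · exact one_ne_zero (hj.1 ▸ hk.2 j h)
  · exact one_ne_zero (hk.1 ▸ hj.2 k h)

theorem sum_pivotBox (c : Fin (m + 1) → ℕ) (j : Fin (m + 1)) :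
    ∑ p ∈ pivotBox F j, ∏ i, p i ^ c i =
      (∏ i ∈ Iio j, (0 : F) ^ c i) * ∏ i ∈ Ioi j, ∑ x : F, x ^ c i := by
  rw [pivotBox, ← prod_univ_sum _ fun i (x : F) => x ^ c i,
    ← prod_filter_mul_prod_filter_not univ (· < j), filter_gt_eq_Iio]
  simp only [not_lt, filter_le_eq_Ici, ← mul_prod_Ioi_eq_prod_Ici, lt_irrefl, if_false,
    if_true, sum_singleton, one_pow, one_mul]
  congr 1
  · exact prod_congr rfl fun i hi => by simp [mem_Iio.1 hi]
  · refine prod_congr rfl fun i hi => ?_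
    have hji := mem_Ioi.1 hi
    simp [hji.not_gt, hji.ne']

variable [DecidableEq F]

theorem filter_eq_biUnion_pivotBox :
    univ.filter (fun p : Fin (m + 1) → F => ∃ j, p j = 1 ∧ ∀ i, i < j → p i = 0) =
      univ.biUnion (pivotBox F) := by
  ext p
  simp [mem_pivotBox]

theorem projSum_eq_sum_prod (c : Fin (m + 1) → ℕ) :
    projSum F m c = ∑ j, (∏ i ∈ Iio j, (0 : F) ^ c i) * ∏ i ∈ Ioi j, ∑ x : F, x ^ c i := by
  rw [projSum, filter_eq_biUnion_pivotBox, sum_biUnion pairwiseDisjoint_pivotBox]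
  exact sum_congr rfl fun j _ => sum_pivotBox c j

variable (c : Fin (m + 1) → ℕ) {s : Fin (m + 1)}

theorem prod_Ioi_dvd_projSum (hs : 0 < c s) :
    (∏ t ∈ Ioi s, ∑ x : F, x ^ c t) ∣ projSum F m c := by
  rw [projSum_eq_sum_prod]
  refine dvd_sum fun j _ => ?_
  rcases lt_or_ge s j with hsj | hjs
  · rw [prod_eq_zero (mem_Iio.2 hsj) (zero_pow hs.ne'), zero_mul]
    exact dvd_zero _
  · exact (prod_dvd_prod_of_subset _ _ _ (Ioi_subset_Ioi hjs)).mul_left _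

theorem projSum_eq_prod_Ioi (hs : 0 < c s) (hmin : ∀ i, i < s → c i = 0)
    (hcs : ∑ x : F, x ^ c s = 0) :
    projSum F m c = ∏ t ∈ Ioi s, ∑ x : F, x ^ c t := by
  rw [projSum_eq_sum_prod, sum_eq_single s]
  · rw [prod_eq_one fun i hi => by rw [hmin i (mem_Iio.1 hi), pow_zero], one_mul]
  · intro j _ hjs
    rcases hjs.lt_or_gt with hjs | hsj
    · rw [prod_eq_zero (mem_Ioi.2 hjs) hcs, mul_zero]
    · rw [prod_eq_zero (mem_Iio.2 hsj) (zero_pow hs.ne'), zero_mul]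
  · exact absurd (mem_univ s)

end ProjSum

/-- Nonzero-entry criterion in the open interval `rQ/2 < v < (r+1)Q/2`:
writing `2v = rQ + β` with `0 < β < Q` and `c_i = a_i + b_i`, the projective sum
of `X^a X^b` is nonzero iff `c_s ≡ β (mod Q)` and every `c_j` with `j > s` is a
positive multiple of `Q`, where `s = min {i : c_i > 0}`; in that case the sum
equals `(-1)^{m-s}`. -/
theorem projSum_ne_zero_criterion (F : Type*) [Field F] [Fintype F] [DecidableEq F]
    (q r v β m : ℕ) (hq : Fintype.card F = q)
    (h1 : r * (q - 1) < 2 * v) (h2 : 2 * v < (r + 1) * (q - 1))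
    (hβ : β = 2 * v - r * (q - 1))
    (a b : Fin (m + 1) → ℕ) (hav : ∑ i, a i = v) (hbv : ∑ i, b i = v)
    (s : Fin (m + 1)) (hs : 0 < a s + b s) (hmin : ∀ i, i < s → a i + b i = 0) :
    (projSum F m (fun i => a i + b i) ≠ 0 ↔
      ((a s + b s) % (q - 1) = β % (q - 1) ∧
        ∀ j, s < j → (q - 1) ∣ (a j + b j) ∧ 0 < a j + b j)) ∧
    (projSum F m (fun i => a i + b i) ≠ 0 →
      projSum F m (fun i => a i + b i) = (-1 : F) ^ (m - (s : ℕ))) := by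
  subst hq
  set Q := Fintype.card F - 1
  set c : Fin (m + 1) → ℕ := fun i => a i + b i
  have hsum : ∑ i, c i = r * Q + β := by
    simp only [c, sum_add_distrib, hav, hbv]
    omega
  have hβ_pos : 0 < β := by omega
  have hβ_lt : β < Q := by rw [add_mul, one_mul] at h2; omega
  have key (hpos : ∀ j, s < j → Q ∣ c j ∧ 0 < c j) :
      c s % Q = β % Q ∧ projSum F m c = (-1 : F) ^ (m - (s : ℕ)) := by
    have hcs : c s % Q = β % Q := by
      rw [← Nat.sum_modEq_of_eq_zero_of_dvd hmin fun j hj => (hpos j hj).1, hsum,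
        Nat.mul_add_mod_self_right]
    have hσs : ∑ x : F, x ^ c s = 0 := by
      rw [FiniteField.sum_pow_eq_ite, if_neg]
      rintro ⟨hdvd, -⟩
      rw [Nat.mod_eq_zero_of_dvd hdvd, Nat.mod_eq_of_lt hβ_lt] at hcs
      omega
    refine ⟨hcs, ?_⟩
    rw [projSum_eq_prod_Ioi c hs hmin hσs,
      FiniteField.prod_sum_pow_eq_neg_one_pow fun t ht => hpos t (mem_Ioi.1 ht), Fin.card_Ioi]
    simp
  have cond_of_ne (h : projSum F m c ≠ 0) (j : Fin (m + 1)) (hj : s < j) : Q ∣ c j ∧ 0 < c j :=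
    FiniteField.prod_sum_pow_ne_zero_iff.1
      (fun h0 => h (zero_dvd_iff.1 (h0 ▸ prod_Ioi_dvd_projSum c hs))) j (mem_Ioi.2 hj)
  refine ⟨⟨fun h => ⟨(key (cond_of_ne h)).1, cond_of_ne h⟩, fun h => ?_⟩,
    fun h => (key (cond_of_ne h)).2⟩
  rw [(key h.2).2]
  exact pow_ne_zero _ (neg_ne_zero.2 one_ne_zero)
end

section
/- Let q be a prime power, Q = q-1, r ≥ 1, and v with rQ/2 < v < (r+1)Q/2; write 2v = rQ + β, 0 < β < Q, L = rQ - v, U = v. Index rows by tuples a ∈ {0,...,Q}^r with L ≤ |a| ≤ U, columns by tuples b in the same set. Define the matrix P with entry at (a,b) equal to the projective inner product ⟨ev(M_a), ev(M_{b̄})⟩ over P^r(F_q), where M_a = z_0^{v-|a|} z_1^{a_1}···z_r^{a_r} and b̄ = (Q-b_1,...,Q-b_r). Then the diagonal entry at (a,a) equals (-1)^r, and for a ≠ b a nonzero entry forces |a| = U and |b| = L. -/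
/-- The entry of the top-layer matrix at `(a, b)`: the projective inner product
`⟨ev(M_a), ev(M_{b̄})⟩` over `ℙ^r(F_q)`, where `M_a = z_0^{v-|a|} z_1^{a_1} ⋯ z_r^{a_r}`
and `b̄ = (Q - b_1, …, Q - b_r)`, `Q = q - 1`, `L = rQ - v`. -/
def topEntry (F : Type*) [Field F] [Fintype F] [DecidableEq F]
    (q r v : ℕ) (a b : Fin r → ℕ) : F :=
  projSum F r (fun i =>
    (Fin.cons (v - ∑ j, a j) a : Fin (r + 1) → ℕ) i +
      (Fin.cons ((∑ j, b j) - (r * (q - 1) - v)) (fun j => (q - 1) - b j) :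
        Fin (r + 1) → ℕ) i)

/-! When the exponent of `z_0` is positive, only the representatives with `z_0 = 1` contribute,
so the entry factors as `∏ i, ∑ x : F, x ^ c_i`, and `∑ x, x ^ c` is `-1` when `c` is a positive
multiple of `q - 1` and `0` otherwise. On the diagonal the `z_0`-exponent is positive because
`L < v`, and every `c_i` equals `q - 1`. Off the diagonal, a positive `z_0`-exponent and a nonzero
entry force `a_i + (q - 1 - b_i) ∈ {q - 1, 2(q - 1)}` for all `i`, i.e. `b ≤ a` with
`a_i = b_i + (q - 1)` somewhere; then `L + (q - 1) ≤ |b| + (q - 1) ≤ |a| ≤ v` contradicts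
`2v < (r + 1)(q - 1)`. So the `z_0`-exponent `(v - |a|) + (|b| - L)` vanishes. -/

theorem FiniteField.sum_pow (K : Type*) [Field K] [Fintype K] (c : ℕ) :
    ∑ x : K, x ^ c = if c ≠ 0 ∧ Fintype.card K - 1 ∣ c then -1 else 0 := by
  classical
  rcases eq_or_ne c 0 with rfl | hc
  · simp
  calc ∑ x : K, x ^ c = ∑ x ∈ Finset.univ.filter (· ≠ 0), x ^ c :=
        (Finset.sum_filter_of_ne fun x _ hx => by rintro rfl; exact hx (zero_pow hc)).symm
    _ = ∑ x : {x : K // x ≠ 0}, (x : K) ^ c := Finset.sum_subtype _ (by simp) _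
    _ = ∑ x : Kˣ, (x : K) ^ c :=
        (unitsEquivNeZero.sum_comp fun x : {x : K // x ≠ 0} => (x : K) ^ c).symm
    _ = _ := by simp [FiniteField.sum_pow_units, hc]

theorem projSum_eq_prod_of_ne_zero (F : Type*) [Field F] [Fintype F] [DecidableEq F] (m : ℕ)
    (c : Fin (m + 1) → ℕ) (h0 : c 0 ≠ 0) :
    projSum F m c = ∏ i : Fin m, ∑ x : F, x ^ c i.succ := by
  have only_first_chart : ∀ p : Fin (m + 1) → F,
      (if ∃ j, p j = 1 ∧ ∀ i, i < j → p i = 0 then ∏ i, p i ^ c i else 0) =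
        if p 0 = 1 then ∏ i, p i ^ c i else 0 := by
    intro p
    by_cases hp0 : p 0 = 1
    · rw [if_pos ⟨0, hp0, fun i hi => absurd hi (Fin.not_lt_zero i)⟩, if_pos hp0]
    rw [if_neg hp0, ite_eq_right_iff]
    rintro ⟨j, hj, hbefore⟩
    have hj0 : 0 < j := Fin.pos_iff_ne_zero.mpr (by rintro rfl; exact hp0 hj)
    exact Finset.prod_eq_zero (Finset.mem_univ 0) (by rw [hbefore 0 hj0, zero_pow h0])
  rw [projSum, Finset.sum_filter, Fintype.prod_sum]
  simp_rw [only_first_chart]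
  rw [← (Fin.consEquiv fun _ => F).sum_comp, Fintype.sum_prod_type, Finset.sum_comm]
  simp [Fin.prod_univ_succ]

theorem topEntry_eq_prod (F : Type*) [Field F] [Fintype F] [DecidableEq F] {q : ℕ} (r v : ℕ)
    (hq : Fintype.card F = q) (a b : Fin r → ℕ)
    (h0 : v - ∑ j, a j + (∑ j, b j - (r * (q - 1) - v)) ≠ 0) :
    topEntry F q r v a b =
      ∏ i, if a i + (q - 1 - b i) ≠ 0 ∧ q - 1 ∣ a i + (q - 1 - b i) then -1 else 0 := by
  rw [topEntry, projSum_eq_prod_of_ne_zero F r _ h0]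
  simp only [Fin.cons_succ, FiniteField.sum_pow, hq]

theorem Nat.le_and_add_le_of_dvd_add_tsub {Q a b : ℕ} (ha : a ≤ Q) (hb : b ≤ Q)
    (hne : a + (Q - b) ≠ 0) (hdvd : Q ∣ a + (Q - b)) : b ≤ a ∧ (a ≠ b → b + Q ≤ a) := by
  obtain ⟨k, hk⟩ := hdvd
  have hk2 : k ≤ 2 :=
    Nat.le_of_mul_le_mul_left (a := k) (b := 2) (c := Q) (by omega) (by omega)
  interval_cases k <;> omega

theorem Finset.sum_add_le_sum_of_le {ι M : Type*} [AddCommMonoid M] [PartialOrder M]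
    [IsOrderedAddMonoid M] {s : Finset ι} {f g : ι → M} {d : M} (h : ∀ i ∈ s, g i ≤ f i)
    {j : ι} (hj : j ∈ s) (hjd : g j + d ≤ f j) : ∑ i ∈ s, g i + d ≤ ∑ i ∈ s, f i := by
  classical
  rw [← Finset.add_sum_erase s g hj, ← Finset.add_sum_erase s f hj, add_right_comm]
  exact add_le_add hjd (Finset.sum_le_sum fun i hi => h i (Finset.mem_of_mem_erase hi))

theorem topEntry_diag_and_offdiag_general (F : Type*) [Field F] [Fintype F] [DecidableEq F]
    (q r v : ℕ) (hq : Fintype.card F = q)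
    (h1 : r * (q - 1) < 2 * v) (h2 : 2 * v < (r + 1) * (q - 1))
    (a b : Fin r → ℕ)
    (ha : ∀ i, a i ≤ q - 1) (haU : ∑ i, a i ≤ v)
    (hb : ∀ i, b i ≤ q - 1) (hbL : r * (q - 1) - v ≤ ∑ i, b i) :
    topEntry F q r v a a = (-1 : F) ^ r ∧
    (a ≠ b → topEntry F q r v a b ≠ 0 →
      ∑ i, a i = v ∧ ∑ i, b i = r * (q - 1) - v) := by
  rw [add_one_mul] at h2
  constructor
  · rw [topEntry_eq_prod F r v hq a a (by omega), ← Fin.prod_const]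
    refine Finset.prod_congr rfl fun i _ => ?_
    rw [Nat.add_sub_cancel' (ha i), if_pos ⟨by omega, dvd_rfl⟩]
  · intro hab hne
    by_cases h0 : v - ∑ j, a j + (∑ j, b j - (r * (q - 1) - v)) = 0
    · omega
    rw [topEntry_eq_prod F r v hq a b h0, Finset.prod_ne_zero_iff] at hne
    have hcoord : ∀ i, b i ≤ a i ∧ (a i ≠ b i → b i + (q - 1) ≤ a i) := fun i => by
      obtain ⟨⟨hne0, hdvd⟩, -⟩ := ite_ne_right_iff.mp (hne i (Finset.mem_univ i))
      exact Nat.le_and_add_le_of_dvd_add_tsub (ha i) (hb i) hne0 hdvd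
    obtain ⟨j, hj⟩ := Function.ne_iff.mp hab
    have hsum := Finset.sum_add_le_sum_of_le (fun i _ => (hcoord i).1) (Finset.mem_univ j)
      ((hcoord j).2 hj)
    omega

/-- Diagonal entries of the top-layer matrix equal `(-1)^r`, and a nonzero
off-diagonal entry forces `|a| = U = v` and `|b| = L = rQ - v`. -/
theorem topEntry_diag_and_offdiag (F : Type*) [Field F] [Fintype F] [DecidableEq F]
    (q r v : ℕ) (hq : Fintype.card F = q) (hr : 1 ≤ r)
    (h1 : r * (q - 1) < 2 * v) (h2 : 2 * v < (r + 1) * (q - 1))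
    (a b : Fin r → ℕ)
    (ha : ∀ i, a i ≤ q - 1) (haL : r * (q - 1) - v ≤ ∑ i, a i) (haU : ∑ i, a i ≤ v)
    (hb : ∀ i, b i ≤ q - 1) (hbL : r * (q - 1) - v ≤ ∑ i, b i) (hbU : ∑ i, b i ≤ v) :
    topEntry F q r v a a = (-1 : F) ^ r ∧
    (a ≠ b → topEntry F q r v a b ≠ 0 →
      ∑ i, a i = v ∧ ∑ i, b i = r * (q - 1) - v) :=
  topEntry_diag_and_offdiag_general F q r v hq h1 h2 a b ha haU hb hbL
end
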